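/- For the solvable Lie algebra [e₄,e₁]=e₁, [e₄,e₂]=e₂, [e₄,e₃]=e₃, with the standard hypercomplex structure and metric g(x,y)=x¹y¹+x²y²-x³y³-x⁴y⁴, the only nonzero Lee form components are θ₁(e₃) = -2, θ₂(e₂) = -4, θ₃(e₁) = 4, and these satisfy the identity θ₂∘J₂ = θ₃∘J₃ = -2(θ₁∘J₁). -/

import Mathlib

noncomputable section

/-- The underlying 4-dimensional real vector space. -/
abbrev V : Type := Fin 4 → ℝ

/-- The standard basis of ℝ⁴. -/
def e : Fin 4 → V := fun i => Pi.single i 1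

/-- The neutral metric g(x,y) = x¹y¹ + x²y² - x³y³ - x⁴y⁴. -/
def g (x y : V) : ℝ := x 0 * y 0 + x 1 * y 1 - x 2 * y 2 - x 3 * y 3

/-- J₁ of the standard hypercomplex structure. -/
def J1 (x : V) : V := ![-x 1, x 0, x 3, -x 2]

/-- J₂ of the standard hypercomplex structure. -/
def J2 (x : V) : V := ![-x 2, -x 3, x 0, x 1]

/-- J₃ of the standard hypercomplex structure. -/
def J3 (x : V) : V := ![x 3, -x 2, x 1, -x 0]

/-- The bracket of type (hc4), second case: [e₄,e₁]=e₁, [e₄,e₂]=e₂, [e₄,e₃]=e₃. -/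
def br (x y : V) : V :=
  ![x 3 * y 0 - x 0 * y 3, x 3 * y 1 - x 1 * y 3, x 3 * y 2 - x 2 * y 3, 0]


/-- Structure tensor F(x,y,z) = g((∇ₓJ)y, z) = g(∇ₓ(Jy) - J(∇ₓy), z). -/
def F (J : V → V) (nabla : V → V → V) (x y z : V) : ℝ :=
  g (nabla x (J y) - J (nabla x y)) z

/-- Lee form θ(z) = Σᵢ gⁱⁱ F(eᵢ,eᵢ,z) with gⁱⁱ = (1,1,-1,-1). -/
def theta (J : V → V) (nabla : V → V → V) (z : V) : ℝ :=
  F J nabla (e 0) (e 0) z + F J nabla (e 1) (e 1) z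
    - F J nabla (e 2) (e 2) z - F J nabla (e 3) (e 3) z

/-- The Levi-Civita connection of `g` for the bracket `br`, solved from the Koszul formula. -/
def leviCivita (x y : V) : V :=
  ![-(x 0 * y 3), -(x 1 * y 3), -(x 2 * y 3), -(x 0 * y 0 + x 1 * y 1 - x 2 * y 2)]

lemma g_basis (v : V) (i : Fin 4) : g v (e i) = (if i.val < 2 then 1 else -1) * v i := by
  fin_cases i <;> simp [g, e]

lemma eq_of_forall_g_basis {u v : V} (h : ∀ i, g u (e i) = g v (e i)) : u = v := by
  funext i
  have hi := h i
  rw [g_basis, g_basis] at hi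
  split_ifs at hi <;> linarith

lemma eq_leviCivita_of_koszul (nabla : V → V → V)
    (hK : ∀ x y z : V,
      2 * g (nabla x y) z = g (br x y) z + g (br z x) y + g (br z y) x) :
    nabla = leviCivita := by
  funext x y
  refine eq_of_forall_g_basis fun i => ?_
  have hi := hK x y (e i)
  fin_cases i <;> simp [g, br, e, leviCivita] at hi ⊢ <;> linarith

lemma theta_J1_leviCivita (z : V) : theta J1 leviCivita z = -2 * z 2 := by
  simp [theta, F, leviCivita, g, J1, e]; ring

lemma theta_J2_leviCivita (z : V) : theta J2 leviCivita z = -4 * z 1 := by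
  simp [theta, F, leviCivita, g, J2, e]; ring

lemma theta_J3_leviCivita (z : V) : theta J3 leviCivita z = 4 * z 0 := by
  simp [theta, F, leviCivita, g, J3, e]; ring

/-- Lee forms of the (hc4b) structure: θ₁(e₃)=-2, θ₂(e₂)=-4, θ₃(e₁)=4 are the
only nonzero components, and θ₂∘J₂ = θ₃∘J₃ = -2(θ₁∘J₁). -/
theorem hc4b_lee_forms (nabla : V → V → V)
    (hK : ∀ x y z : V,
      2 * g (nabla x y) z = g (br x y) z + g (br z x) y + g (br z y) x) :
    (∀ i : Fin 4, theta J1 nabla (e i) = if i = 2 then -2 else 0) ∧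
    (∀ i : Fin 4, theta J2 nabla (e i) = if i = 1 then -4 else 0) ∧
    (∀ i : Fin 4, theta J3 nabla (e i) = if i = 0 then 4 else 0) ∧
    (∀ z : V, theta J2 nabla (J2 z) = theta J3 nabla (J3 z)) ∧
    (∀ z : V, theta J3 nabla (J3 z) = -2 * theta J1 nabla (J1 z)) := by
  obtain rfl := eq_leviCivita_of_koszul nabla hK
  simp only [theta_J1_leviCivita, theta_J2_leviCivita, theta_J3_leviCivita]
  refine ⟨?_, ?_, ?_, ?_, ?_⟩
  · intro i; fin_cases i <;> simp [e]
  · intro i; fin_cases i <;> simp [e]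
  · intro i; fin_cases i <;> simp [e]
  · intro z; simp [J2, J3]
  · intro z; simp [J1, J3]; ring
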